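/- arXiv:1911.01478 — 5 statements merged into one kernel-verified Lean document; each statement's English description precedes it below -/
import Mathlib

section
/- For every graph G and every weight vector c on the vertices, if x is a c-maximal point of the edge relaxation R_edge(G) = {x in [0,1]^V : x_u + x_v <= 1 for every edge {u,v}}, then there exists a c-maximal characteristic vector y of a stable set of G such that y_v = x_v for every vertex v with x_v in {0,1}. -/
/-!
Let `T` be a maximum-weight stable set and `S = (T \ {x = 0}) ∪ {x = 1}`. Since `x u + x v ≤ 1`,
a neighbour of a vertex with `x v = 1` has `x u = 0`, so `S` is stable. The direction `χ_T - χ_S`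
never increases a constraint of the edge relaxation that is tight at `x`, so `x + ε (χ_T - χ_S)`
is feasible for small `ε > 0`; maximality of `x` gives `c(T) ≤ c(S)`. Hence `S` is a
maximum-weight stable set, and it agrees with `x` wherever `x` is `0` or `1`.
-/

def edgeRelax {V : Type*} (G : SimpleGraph V) : Set (V → ℝ) :=
  {x | (∀ v, 0 ≤ x v ∧ x v ≤ 1) ∧ ∀ u v, G.Adj u v → x u + x v ≤ 1}

def IsStable {V : Type*} (G : SimpleGraph V) (S : Finset V) : Prop :=
  ∀ u ∈ S, ∀ v ∈ S, ¬ G.Adj u v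

noncomputable def chi {V : Type*} [DecidableEq V] (S : Finset V) : V → ℝ :=
  fun v => if v ∈ S then 1 else 0

open Filter Topology

theorem eventually_add_mul_le {a b r : ℝ} (ha : a ≤ r) (hb : a = r → b ≤ 0) :
    ∀ᶠ ε in 𝓝[>] (0 : ℝ), a + ε * b ≤ r := by
  rcases ha.lt_or_eq with ha | rfl
  · have hcont : Tendsto (fun ε : ℝ => a + ε * b) (𝓝[>] 0) (𝓝 (a + 0 * b)) :=
      (tendsto_nhdsWithin_of_tendsto_nhds (tendsto_id.mul_const b)).const_add a
    rw [zero_mul, add_zero] at hcont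
    exact (hcont.eventually (gt_mem_nhds ha)).mono fun _ h => h.le
  · filter_upwards [self_mem_nhdsWithin] with ε hε
    nlinarith [hb rfl, show (0 : ℝ) < ε from hε]

theorem exists_pos_add_smul_mem_edgeRelax {V : Type*} [Finite V] {G : SimpleGraph V}
    {x d : V → ℝ} (hx : x ∈ edgeRelax G) (h0 : ∀ v, x v = 0 → 0 ≤ d v)
    (h1 : ∀ v, x v = 1 → d v ≤ 0)
    (hadj : ∀ u v, G.Adj u v → x u + x v = 1 → d u + d v ≤ 0) :
    ∃ ε : ℝ, 0 < ε ∧ x + ε • d ∈ edgeRelax G := by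
  obtain ⟨hbox, hedge⟩ := hx
  have hlower : ∀ᶠ ε in 𝓝[>] (0 : ℝ), ∀ v, 0 ≤ x v + ε * d v := by
    refine eventually_all.2 fun v => ?_
    refine (eventually_add_mul_le (a := -x v) (b := -d v) (r := 0) (by linarith [hbox v])
      fun h => by linarith [h0 v (by linarith)]).mono fun ε h => ?_
    linarith
  have hupper : ∀ᶠ ε in 𝓝[>] (0 : ℝ), ∀ v, x v + ε * d v ≤ 1 :=
    eventually_all.2 fun v => eventually_add_mul_le (hbox v).2 (h1 v)
  have hedges : ∀ᶠ ε in 𝓝[>] (0 : ℝ), ∀ u v, G.Adj u v →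
      x u + ε * d u + (x v + ε * d v) ≤ 1 := by
    refine eventually_all.2 fun u => eventually_all.2 fun v => ?_
    by_cases huv : G.Adj u v
    · refine (eventually_add_mul_le (hedge u v huv) (hadj u v huv)).mono fun ε h _ => ?_
      linarith
    · exact Eventually.of_forall fun _ h => absurd h huv
  obtain ⟨ε, hlo, hup, hed, hε⟩ :=
    (hlower.and (hupper.and (hedges.and self_mem_nhdsWithin))).exists
  exact ⟨ε, hε, fun v => ⟨hlo v, hup v⟩, hed⟩

theorem sum_mul_nonpos_of_add_smul_mem {V : Type*} [Fintype V] {P : Set (V → ℝ)}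
    {c x d : V → ℝ} (hmax : ∀ y ∈ P, ∑ v, c v * y v ≤ ∑ v, c v * x v) {ε : ℝ} (hε : 0 < ε)
    (hmem : x + ε • d ∈ P) : ∑ v, c v * d v ≤ 0 := by
  have h := hmax _ hmem
  simp only [Pi.add_apply, Pi.smul_apply, smul_eq_mul, mul_add, Finset.sum_add_distrib,
    mul_left_comm (c _) ε, ← Finset.mul_sum] at h
  nlinarith

theorem sum_mul_chi {V : Type*} [Fintype V] [DecidableEq V] (c : V → ℝ) (S : Finset V) :
    ∑ v, c v * chi S v = ∑ v ∈ S, c v := by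
  simp [chi, Finset.sum_ite_mem]

theorem exists_isStable_forall_sum_le {V : Type*} [Fintype V] (G : SimpleGraph V)
    (c : V → ℝ) : ∃ T, IsStable G T ∧ ∀ T', IsStable G T' → ∑ v ∈ T', c v ≤ ∑ v ∈ T, c v := by
  classical
  obtain ⟨T, hT, hmax⟩ := Finset.exists_max_image {T : Finset V | IsStable G T}
    (fun T => ∑ v ∈ T, c v) ⟨∅, Finset.mem_filter.2 ⟨Finset.mem_univ _, by simp [IsStable]⟩⟩
  exact ⟨T, by simpa using hT, fun T' hT' => hmax T' (by simpa using hT')⟩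

section Persist

variable {V : Type*} [Fintype V] [DecidableEq V] {G : SimpleGraph V} {x : V → ℝ} {T : Finset V}

noncomputable def persist (x : V → ℝ) (T : Finset V) : Finset V :=
  T.filter (x · ≠ 0) ∪ Finset.univ.filter (x · = 1)

theorem mem_persist {v : V} : v ∈ persist x T ↔ v ∈ T ∧ x v ≠ 0 ∨ x v = 1 := by
  simp [persist]

theorem isStable_persist (hx : x ∈ edgeRelax G) (hT : IsStable G T) :
    IsStable G (persist x T) := by
  have key : ∀ u v, G.Adj u v → x v = 1 → x u = 0 := fun u v huv hv =>
    le_antisymm (by linarith [hx.2 u v huv]) (hx.1 u).1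
  intro u hu v hv huv
  rw [mem_persist] at hu hv
  rcases hv with ⟨hvT, hv0⟩ | hv1
  · rcases hu with ⟨huT, -⟩ | hu1
    · exact hT u huT v hvT huv
    · exact hv0 (key v u huv.symm hu1)
  · have hu0 := key u v huv hv1
    rcases hu with ⟨-, hu⟩ | hu <;> simp [hu0] at hu

theorem chi_persist_eq {v : V} (hv : x v = 0 ∨ x v = 1) : chi (persist x T) v = x v := by
  rcases hv with hv | hv <;> simp [chi, mem_persist, hv]

theorem sum_le_sum_persist {c : V → ℝ} (hx : x ∈ edgeRelax G)
    (hmax : ∀ y ∈ edgeRelax G, ∑ v, c v * y v ≤ ∑ v, c v * x v) (hT : IsStable G T) :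
    ∑ v ∈ T, c v ≤ ∑ v ∈ persist x T, c v := by
  have h0 : ∀ v, x v = 0 → 0 ≤ (chi T - chi (persist x T)) v := by
    intro v hv
    simp only [Pi.sub_apply, chi, mem_persist]
    split_ifs <;> grind
  have h1 : ∀ v, x v = 1 → (chi T - chi (persist x T)) v ≤ 0 := by
    intro v hv
    simp only [Pi.sub_apply, chi, mem_persist]
    split_ifs <;> grind
  have hadj : ∀ u v, G.Adj u v → x u + x v = 1 →
      (chi T - chi (persist x T)) u + (chi T - chi (persist x T)) v ≤ 0 := by
    intro u v huv hsum
    -- If the endpoint in `T` is dropped from `persist x T`, the other endpoint has `x = 1`.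
    have hT' : ¬(u ∈ T ∧ v ∈ T) := fun h => hT u h.1 v h.2 huv
    simp only [Pi.sub_apply, chi, mem_persist]
    split_ifs <;> grind
  obtain ⟨ε, hε, hmem⟩ := exists_pos_add_smul_mem_edgeRelax hx h0 h1 hadj
  have h := sum_mul_nonpos_of_add_smul_mem hmax hε hmem
  simp only [Pi.sub_apply, mul_sub, Finset.sum_sub_distrib, sum_mul_chi] at h
  linarith

end Persist

/-- Nemhauser–Trotter persistency for the edge relaxation. -/
theorem stmt0 {V : Type*} [Fintype V] [DecidableEq V] (G : SimpleGraph V)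
    (c : V → ℝ) (x : V → ℝ) (hx : x ∈ edgeRelax G)
    (hmax : ∀ y ∈ edgeRelax G, ∑ v, c v * y v ≤ ∑ v, c v * x v) :
    ∃ S : Finset V, IsStable G S ∧
      (∀ T : Finset V, IsStable G T → ∑ v ∈ T, c v ≤ ∑ v ∈ S, c v) ∧
      (∀ v, (x v = 0 ∨ x v = 1) → chi S v = x v) := by
  obtain ⟨T, hT, hTmax⟩ := exists_isStable_forall_sum_le G c
  exact ⟨persist x T, isStable_persist hx hT,
    fun T' hT' => (hTmax T' hT').trans (sum_le_sum_persist hx hmax hT),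
    fun _ hv => chi_persist_eq hv⟩
end

section
/- Let P and Q be polytopes in R^n. If there exists a vector c in R^n such that the dimension of the optimal face of Q induced by c is strictly smaller than the dimension of the optimal face of P induced by c, then there exists a vector c' in R^n such that the optimal face of Q induced by c' is a vertex of Q, while the optimal face of P induced by c' is not a vertex of P. -/
/-- The optimal face of `P` induced by the objective `c`. -/
def optFace {n : ℕ} (P : Set (Fin n → ℝ)) (c : Fin n → ℝ) : Set (Fin n → ℝ) :=
  {x | x ∈ P ∧ ∀ y ∈ P, ∑ i, c i * y i ≤ ∑ i, c i * x i}

/-- Dimension of a subset of `ℝⁿ` (dimension of its affine hull). -/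
noncomputable def dimSet {n : ℕ} (s : Set (Fin n → ℝ)) : ℕ :=
  Module.finrank ℝ ↥(vectorSpan ℝ s)

/-!
The optimal face of `convexHull S` for `c` is the convex hull of the `c`-optimal points of `S`, so
the hypothesis says that the `c`-optimal points `A` of `SP` span more directions than those, `B`,
of `SQ`. Choose `u` vanishing on the directions of `B` but not constant on `A`, and `d₀` taking
distinct values on the points of `B`. Along the line `d₀ + t • u` the maximizer over `B` stays
unique, whereas the maximizer over `A` cannot stay unique since `u` is not constant on `A`; this
gives `d` with a unique maximizer on `B` but not on `A`. For large `N`, maximizing `N • c + d`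
means maximizing `c` and then `d`, which transfers `d` to the polytopes.
-/

open Filter Matrix

section Convex

variable {E : Type*} [AddCommGroup E] [Module ℝ E]

theorem Convex.union_halfSpace_lt {t : Set E} (ht : Convex ℝ t) (l : E →ₗ[ℝ] ℝ) {M : ℝ}
    (htM : ∀ x ∈ t, l x ≤ M) : Convex ℝ ({x | l x < M} ∪ t) := by
  have hcomb_lt : ∀ (p q : E) (a b : ℝ), l p < M → q ∈ t → 0 < a → 0 ≤ b → a + b = 1 →
      l (a • p + b • q) < M := by
    intro p q a b hp hq ha hb hab
    rw [map_add, map_smul, map_smul, smul_eq_mul, smul_eq_mul]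
    calc a * l p + b * l q < a * M + b * M :=
          add_lt_add_of_lt_of_le (mul_lt_mul_of_pos_left hp ha)
            (mul_le_mul_of_nonneg_left (htM q hq) hb)
      _ = M := by rw [← add_mul, hab, one_mul]
  intro p hp q hq a b ha hb hab
  rcases hp with hp | hp <;> rcases hq with hq | hq
  · exact Or.inl (convex_halfSpace_lt l.isLinear M hp hq ha hb hab)
  · rcases ha.eq_or_lt with rfl | ha
    · simp_all
    · exact Or.inl (hcomb_lt p q a b hp hq ha hb hab)
  · rcases hb.eq_or_lt with rfl | hb
    · simp_all
    · rw [add_comm] at hab ⊢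
      exact Or.inl (hcomb_lt q p b a hq hp hb ha hab)
  · exact Or.inr (ht hp hq ha hb hab)

theorem convexHull_inter_hyperplane_subset {s : Set E} (l : E →ₗ[ℝ] ℝ) {M : ℝ}
    (hs : ∀ x ∈ s, l x ≤ M) :
    convexHull ℝ s ∩ {x | l x = M} ⊆ convexHull ℝ (s ∩ {x | l x = M}) := by
  rintro x ⟨hx, hxM⟩
  have hsub : s ⊆ {x | l x < M} ∪ convexHull ℝ (s ∩ {x | l x = M}) := fun y hy =>
    (hs y hy).lt_or_eq.imp id fun hyM => subset_convexHull ℝ _ ⟨hy, hyM⟩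
  have hconv := (convex_convexHull ℝ (s ∩ {x | l x = M})).union_halfSpace_lt l fun y hy =>
    convexHull_min (fun z hz => hz.2.le) (convex_halfSpace_le l.isLinear M) hy
  exact (convexHull_min hsub hconv hx).resolve_left fun hlt => hlt.ne hxM

end Convex

theorem exists_dotProduct_ne_zero_of_notMem {K ι : Type*} [Field K] [Fintype ι] [DecidableEq ι]
    {p : Submodule K (ι → K)} {w : ι → K} (hw : w ∉ p) :
    ∃ u, u ⬝ᵥ w ≠ 0 ∧ ∀ v ∈ p, u ⬝ᵥ v = 0 := by
  obtain ⟨f, hfw, hfp⟩ := p.exists_dual_map_eq_bot_of_notMem hw inferInstance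
  have hf : ∀ v, (dotProductEquiv K ι).symm f ⬝ᵥ v = f v := fun v =>
    LinearMap.congr_fun ((dotProductEquiv K ι).apply_symm_apply f) v
  refine ⟨(dotProductEquiv K ι).symm f, by rwa [hf], fun v hv => ?_⟩
  rw [hf]
  exact LinearMap.le_ker_iff_map.2 hfp hv

theorem exists_injOn_dotProduct {ι : Type*} [Fintype ι] {s : Set (ι → ℝ)} (hs : s.Finite) :
    ∃ d : ι → ℝ, s.InjOn (d ⬝ᵥ ·) := by
  classical
  let hyperplane (p : {p : s × s // p.1 ≠ p.2}) : Submodule ℝ (ι → ℝ) :=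
    LinearMap.ker (dotProductEquiv ℝ ι ((p.1.1 : ι → ℝ) - p.1.2))
  have : Finite s := hs.to_subtype
  by_contra! hcover
  obtain ⟨⟨⟨⟨x, hx⟩, ⟨y, hy⟩⟩, hxy⟩, htop⟩ :=
    Subspace.exists_eq_top_of_iUnion_eq_univ (p := hyperplane) <| Set.eq_univ_of_forall fun d => by
      obtain ⟨x, hx, y, hy, hd, hxy⟩ : ∃ x ∈ s, ∃ y ∈ s, d ⬝ᵥ x = d ⬝ᵥ y ∧ x ≠ y := by
        simpa [Set.InjOn] using hcover d
      refine Set.mem_iUnion.2 ⟨⟨(⟨x, hx⟩, ⟨y, hy⟩), by simpa using hxy⟩, ?_⟩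
      simp [hyperplane, dotProduct_comm _ d, hd]
  have hself : (x - y) ⬝ᵥ (x - y) = 0 := htop.ge Submodule.mem_top
  exact hxy (Subtype.ext (sub_eq_zero.1 (dotProduct_self_eq_zero.1 hself)))

theorem eventually_mul_add_nonpos_iff (p q : ℝ) :
    ∀ᶠ N : ℝ in atTop, N * p + q ≤ 0 ↔ p < 0 ∨ p = 0 ∧ q ≤ 0 := by
  rcases lt_trichotomy p 0 with hp | rfl | hp
  · filter_upwards [eventually_ge_atTop (q / -p)] with N hN
    rw [div_le_iff₀ (neg_pos.2 hp)] at hN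
    simp only [hp, true_or, iff_true]
    linarith
  · simp
  · filter_upwards [eventually_gt_atTop (-q / p)] with N hN
    rw [div_lt_iff₀ hp] at hN
    simp only [hp.not_gt, hp.ne', false_or, false_and, iff_false, not_le]
    linarith

section OptFace

variable {n : ℕ}

theorem mem_optFace_iff {s : Set (Fin n → ℝ)} {c x : Fin n → ℝ} :
    x ∈ optFace s c ↔ x ∈ s ∧ ∀ y ∈ s, c ⬝ᵥ y ≤ c ⬝ᵥ x :=
  Iff.rfl

theorem optFace_subset (s : Set (Fin n → ℝ)) (c : Fin n → ℝ) : optFace s c ⊆ s :=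
  fun _ hx => hx.1

theorem dotProduct_eq_of_mem_optFace {s : Set (Fin n → ℝ)} {c x y : Fin n → ℝ}
    (hx : x ∈ optFace s c) (hy : y ∈ optFace s c) : c ⬝ᵥ x = c ⬝ᵥ y :=
  le_antisymm (hy.2 x hx.1) (hx.2 y hy.1)

theorem Set.Finite.optFace_nonempty {s : Set (Fin n → ℝ)} (hs : s.Finite) (hne : s.Nonempty)
    (c : Fin n → ℝ) : (optFace s c).Nonempty :=
  s.exists_max_image (c ⬝ᵥ ·) hs hne

theorem optFace_convexHull (s : Set (Fin n → ℝ)) (c : Fin n → ℝ) :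
    optFace (convexHull ℝ s) c = convexHull ℝ (optFace s c) := by
  let l := dotProductEquiv ℝ (Fin n) c
  ext x
  constructor
  · rintro ⟨hx, hmax⟩
    have hs : ∀ y ∈ s, l y ≤ l x := fun y hy => hmax y (subset_convexHull ℝ s hy)
    refine convexHull_mono ?_ (convexHull_inter_hyperplane_subset l hs ⟨hx, rfl⟩)
    rintro y ⟨hy, hyx⟩
    exact ⟨hy, fun z hz => (hs z hz).trans_eq (Eq.symm hyx)⟩
  · intro hx
    obtain ⟨m, hm⟩ := convexHull_nonempty_iff.1 ⟨x, hx⟩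
    have hle : ∀ y ∈ convexHull ℝ s, l y ≤ l m :=
      fun y hy => convexHull_min hm.2 (convex_halfSpace_le l.isLinear _) hy
    have hge : l m ≤ l x := convexHull_min (fun y hy => (dotProduct_eq_of_mem_optFace hm hy).le)
      (convex_halfSpace_ge l.isLinear _) hx
    exact ⟨convexHull_mono (optFace_subset s c) hx, fun y hy => (hle y hy).trans hge⟩

theorem dimSet_optFace_convexHull (s : Set (Fin n → ℝ)) (c : Fin n → ℝ) :
    dimSet (optFace (convexHull ℝ s) c) = Module.finrank ℝ (vectorSpan ℝ (optFace s c)) := by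
  rw [dimSet, optFace_convexHull, ← direction_affineSpan, affineSpan_convexHull,
    direction_affineSpan]

theorem mem_optFace_optFace_iff {s : Set (Fin n → ℝ)} {c d x : Fin n → ℝ} :
    x ∈ optFace (optFace s c) d ↔
      x ∈ s ∧ ∀ y ∈ s, c ⬝ᵥ y < c ⬝ᵥ x ∨ c ⬝ᵥ y = c ⬝ᵥ x ∧ d ⬝ᵥ y ≤ d ⬝ᵥ x := by
  constructor
  · rintro ⟨⟨hx, hcx⟩, hdx⟩
    refine ⟨hx, fun y hy => (hcx y hy).lt_or_eq.imp_right fun hxy => ⟨hxy, hdx y ?_⟩⟩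
    exact ⟨hy, fun z hz => (hcx z hz).trans_eq hxy.symm⟩
  · rintro ⟨hx, hlex⟩
    have hcx : ∀ y ∈ s, c ⬝ᵥ y ≤ c ⬝ᵥ x := fun y hy =>
      (hlex y hy).elim le_of_lt fun h => h.1.le
    refine ⟨⟨hx, hcx⟩, fun y hy => ?_⟩
    exact ((hlex y hy.1).resolve_left (hy.2 x hx).not_gt).2

theorem Set.Finite.eventually_optFace_smul_add {s : Set (Fin n → ℝ)} (hs : s.Finite)
    (c d : Fin n → ℝ) : ∀ᶠ N : ℝ in atTop, optFace s (N • c + d) = optFace (optFace s c) d := by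
  have hpairs : ∀ᶠ N : ℝ in atTop, ∀ p ∈ s ×ˢ s,
      N * (c ⬝ᵥ (p.2 - p.1)) + d ⬝ᵥ (p.2 - p.1) ≤ 0 ↔
        c ⬝ᵥ (p.2 - p.1) < 0 ∨ c ⬝ᵥ (p.2 - p.1) = 0 ∧ d ⬝ᵥ (p.2 - p.1) ≤ 0 :=
    (hs.prod hs).eventually_all.2 fun p _ => eventually_mul_add_nonpos_iff _ _
  filter_upwards [hpairs] with N hN
  ext x
  rw [mem_optFace_optFace_iff, mem_optFace_iff]
  refine and_congr_right fun hx => forall₂_congr fun y hy => ?_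
  have := hN (x, y) ⟨hx, hy⟩
  simp only [dotProduct_sub, add_dotProduct, smul_dotProduct, smul_eq_mul, sub_nonpos,
    sub_neg, sub_eq_zero] at this ⊢
  rw [← this]
  constructor <;> intro h <;> linarith

theorem isClosed_setOf_mem_optFace {X : Type*} [TopologicalSpace X] (s : Set (Fin n → ℝ))
    (x : Fin n → ℝ) {f : X → Fin n → ℝ} (hf : Continuous f) :
    IsClosed {t | x ∈ optFace s (f t)} := by
  simp only [mem_optFace_iff, Set.ofPred_and, Set.ofPred_forall]
  exact isClosed_const.inter <| isClosed_iInter fun y => isClosed_iInter fun _ =>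
    isClosed_le (hf.dotProduct continuous_const) (hf.dotProduct continuous_const)

theorem dotProduct_eq_of_forall_mem_optFace_line {s : Set (Fin n → ℝ)} {d u x y : Fin n → ℝ}
    (hx : ∀ t : ℝ, x ∈ optFace s (d + t • u)) (hy : y ∈ s) : u ⬝ᵥ y = u ⬝ᵥ x := by
  have hbound : ∀ t : ℝ, t * (u ⬝ᵥ y - u ⬝ᵥ x) ≤ d ⬝ᵥ x - d ⬝ᵥ y := fun t => by
    have := (mem_optFace_iff.1 (hx t)).2 y hy
    simp only [add_dotProduct, smul_dotProduct, smul_eq_mul] at this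
    linarith
  by_contra hne
  have := hbound ((d ⬝ᵥ x - d ⬝ᵥ y + 1) / (u ⬝ᵥ y - u ⬝ᵥ x))
  rw [div_mul_cancel₀ _ (sub_ne_zero.2 hne)] at this
  linarith

/-- The parameters `t` at which a given point is optimal form finitely many closed sets covering
`ℝ`; if the maximizer were always unique they would be disjoint, so by connectedness one point
would be optimal for every `t`, forcing `u` to be constant on `s`. -/
theorem Set.Finite.exists_not_subsingleton_optFace_line {s : Set (Fin n → ℝ)} (hs : s.Finite)
    (d u : Fin n → ℝ) {x y : Fin n → ℝ} (hx : x ∈ s) (hy : y ∈ s) (hxy : u ⬝ᵥ x ≠ u ⬝ᵥ y) :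
    ∃ t : ℝ, ¬ (optFace s (d + t • u)).Subsingleton := by
  by_contra! hsub
  let T (a : Fin n → ℝ) : Set ℝ := {t | a ∈ optFace s (d + t • u)}
  have hclosed (a : Fin n → ℝ) : IsClosed (T a) := isClosed_setOf_mem_optFace s a (by fun_prop)
  obtain ⟨a, ha⟩ := hs.optFace_nonempty ⟨x, hx⟩ d
  have hcompl : (T a)ᶜ = ⋃ b ∈ s \ {a}, T b := by
    ext t
    simp only [Set.mem_compl_iff, Set.mem_iUnion, Set.mem_sdiff, Set.mem_singleton_iff,
      exists_prop]
    constructor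
    · intro hat
      obtain ⟨b, hb⟩ := hs.optFace_nonempty ⟨x, hx⟩ (d + t • u)
      exact ⟨b, ⟨hb.1, fun hba => hat (hba ▸ hb)⟩, hb⟩
    · rintro ⟨b, ⟨-, hba⟩, hb⟩ hat
      exact hba (hsub t hb hat)
  have hopen : IsOpen (T a) := by
    rw [← compl_compl (T a), hcompl]
    exact ((hs.subset Set.sdiff_subset).isClosed_biUnion fun b _ => hclosed b).isOpen_compl
  have huniv : T a = Set.univ := IsClopen.eq_univ ⟨hclosed a, hopen⟩ ⟨0, by simpa [T] using ha⟩
  have hline (t : ℝ) : a ∈ optFace s (d + t • u) := Set.eq_univ_iff_forall.1 huniv t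
  exact hxy ((dotProduct_eq_of_forall_mem_optFace_line hline hx).trans
    (dotProduct_eq_of_forall_mem_optFace_line hline hy).symm)

theorem Set.Finite.exists_optFace_eq_singleton_not_subsingleton {s t : Set (Fin n → ℝ)}
    (hs : s.Finite) (ht : t.Finite) (htne : t.Nonempty) (h : ¬ vectorSpan ℝ s ≤ vectorSpan ℝ t) :
    ∃ d, (∃ b, optFace t d = {b}) ∧ ¬ (optFace s d).Subsingleton := by
  rw [vectorSpan_def, Submodule.span_le, Set.not_subset] at h
  obtain ⟨-, ⟨x, hx, y, hy, rfl⟩, hxy⟩ := h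
  obtain ⟨u, hu, hut⟩ := exists_dotProduct_ne_zero_of_notMem hxy
  obtain ⟨d₀, hd₀⟩ := exists_injOn_dotProduct ht
  obtain ⟨r, hr⟩ := hs.exists_not_subsingleton_optFace_line d₀ u hx hy
    (sub_ne_zero.1 (by rwa [← dotProduct_sub]))
  refine ⟨d₀ + r • u, ?_, hr⟩
  obtain ⟨b, hb⟩ := ht.optFace_nonempty htne (d₀ + r • u)
  refine ⟨b, Set.Subsingleton.eq_singleton_of_mem (fun b₁ hb₁ b₂ hb₂ => ?_) hb⟩
  have hu₁₂ : u ⬝ᵥ b₁ = u ⬝ᵥ b₂ := sub_eq_zero.1 <| by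
    rw [← dotProduct_sub]
    exact hut _ (vsub_mem_vectorSpan ℝ hb₁.1 hb₂.1)
  have := dotProduct_eq_of_mem_optFace hb₁ hb₂
  simp only [add_dotProduct, smul_dotProduct, smul_eq_mul, hu₁₂, add_left_inj] at this
  exact hd₀ hb₁.1 hb₂.1 this

end OptFace

theorem stmt1_general {n : ℕ} (SP SQ : Finset (Fin n → ℝ)) (hSQ : SQ.Nonempty)
    (P Q : Set (Fin n → ℝ)) (hP : P = convexHull ℝ ↑SP) (hQ : Q = convexHull ℝ ↑SQ)
    (c : Fin n → ℝ) (h : dimSet (optFace Q c) < dimSet (optFace P c)) :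
    ∃ c' : Fin n → ℝ, (∃ x, optFace Q c' = {x}) ∧ ¬ (∃ x, optFace P c' = {x}) := by
  subst hP hQ
  rw [dimSet_optFace_convexHull, dimSet_optFace_convexHull] at h
  have hfin (S : Finset (Fin n → ℝ)) : (optFace (↑S) c).Finite :=
    S.finite_toSet.subset (optFace_subset _ c)
  obtain ⟨d, ⟨b, hb⟩, hd⟩ := (hfin SP).exists_optFace_eq_singleton_not_subsingleton (hfin SQ)
    (SQ.finite_toSet.optFace_nonempty hSQ c) fun hle => (Submodule.finrank_mono hle).not_gt h
  obtain ⟨N, hNP, hNQ⟩ := (SP.finite_toSet.eventually_optFace_smul_add c d).and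
    (SQ.finite_toSet.eventually_optFace_smul_add c d) |>.exists
  refine ⟨N • c + d, ⟨b, by rw [optFace_convexHull, hNQ, hb, convexHull_singleton]⟩, ?_⟩
  rintro ⟨x, hx⟩
  rw [optFace_convexHull, hNP, convexHull_eq_singleton] at hx
  exact hd (hx ▸ Set.subsingleton_singleton)

theorem stmt1 {n : ℕ} (SP SQ : Finset (Fin n → ℝ)) (hSP : SP.Nonempty) (hSQ : SQ.Nonempty)
    (P Q : Set (Fin n → ℝ)) (hP : P = convexHull ℝ ↑SP) (hQ : Q = convexHull ℝ ↑SQ)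
    (c : Fin n → ℝ) (h : dimSet (optFace Q c) < dimSet (optFace P c)) :
    ∃ c' : Fin n → ℝ, (∃ x, optFace Q c' = {x}) ∧ ¬ (∃ x, optFace P c' = {x}) :=
  stmt1_general SP SQ hSQ P Q hP hQ c h
end

section
/- Let P ⊆ R^n be a non-empty polytope, let c, a ∈ R^n, and let ℓ = min{<a,x> : x ∈ P}. Define h=(β) = max{<c,x> : x ∈ P, <a,x> = β} and h≤(β) = max{<c,x> : x ∈ P, <a,x> ≤ β} for β ≥ ℓ. Then there exists β* ∈ [ℓ, ∞) such that h= and h≤ agree and are strictly monotonically increasing on [ℓ, β*], and h≤ is constant on [β*, ∞). -/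
/-!
The sublevel value function `h≤` is concave: averaging maximisers for two budgets `β₁, β₂` gives
a feasible point for the averaged budget. Let `x₀` maximise `<c,·>` over `P` and, among all such
maximisers, minimise `<a,·>`; put `β* = <a,x₀>`. Then `h≤` equals `max_P <c,·>` from `β*` on and
stays strictly below it on `[ℓ, β*)`, so by concavity it is strictly increasing on `[ℓ, β*]`.
Strict monotonicity in turn forces the maximiser for budget `β ≤ β*` onto the hyperplane
`<a,·> = β`, which gives `h= = h≤` there.
-/

open Set Matrix

theorem ConcaveOn.strictMonoOn_Icc_of_lt_right {𝕜 : Type*} [Field 𝕜] [LinearOrder 𝕜]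
    [IsStrictOrderedRing 𝕜] {a b : 𝕜} {h : 𝕜 → 𝕜} (hh : ConcaveOn 𝕜 (Icc a b) h)
    (hlt : ∀ x ∈ Ico a b, h x < h b) : StrictMonoOn h (Icc a b) := by
  intro u hu v hv huv
  rcases hv.2.eq_or_lt with rfl | hvb
  · exact hlt u ⟨hu.1, huv⟩
  · exact hh.strictMonoOn (right_mem_Icc.2 (hu.1.trans hu.2)) hvb (hlt v ⟨hv.1, hvb⟩)
      ⟨hu, huv.le⟩ ⟨hv, le_rfl⟩ huv

theorem IsCompact.exists_isMaxOn_isMinOn_argmax {E : Type*} [TopologicalSpace E] {P : Set E}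
    {f g : E → ℝ} (hP : IsCompact P) (hne : P.Nonempty) (hf : ContinuousOn f P)
    (hg : Continuous g) : ∃ x₀ ∈ P, IsMaxOn g P x₀ ∧ IsMinOn f {x ∈ P | g x = g x₀} x₀ := by
  obtain ⟨xm, hxm, hmax⟩ := hP.exists_isMaxOn hne hg.continuousOn
  have hK : IsCompact {x ∈ P | g x = g xm} := hP.inter_right (isClosed_eq hg continuous_const)
  obtain ⟨x₀, ⟨hx₀, hgx₀⟩, hmin⟩ :=
    hK.exists_isMinOn ⟨xm, hxm, rfl⟩ (hf.mono fun _ hx => hx.1)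
  exact ⟨x₀, hx₀, fun x hx => (hmax hx).trans_eq hgx₀.symm, by rwa [hgx₀]⟩

section ValueFunction

variable {E : Type*} {P : Set E} {f g : E → ℝ} {ℓ : ℝ} {hle : ℝ → ℝ}

theorem concaveOn_of_isGreatest_sublevel [AddCommGroup E] [Module ℝ E]
    (hf : ConvexOn ℝ P f) (hg : ConcaveOn ℝ P g)
    (hhle : ∀ β, ℓ ≤ β → IsGreatest {r | ∃ x ∈ P, f x ≤ β ∧ g x = r} (hle β)) :
    ConcaveOn ℝ (Ici ℓ) hle := by
  refine ⟨convex_Ici ℓ, fun β₁ hβ₁ β₂ hβ₂ s t hs ht hst => ?_⟩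
  obtain ⟨x₁, hx₁, hfx₁, hgx₁⟩ := (hhle β₁ hβ₁).1
  obtain ⟨x₂, hx₂, hfx₂, hgx₂⟩ := (hhle β₂ hβ₂).1
  have hz : s • x₁ + t • x₂ ∈ P := hf.1 hx₁ hx₂ hs ht hst
  have hfz : f (s • x₁ + t • x₂) ≤ s • β₁ + t • β₂ := by
    refine (hf.2 hx₁ hx₂ hs ht hst).trans ?_
    simp only [smul_eq_mul]
    gcongr
  calc s • hle β₁ + t • hle β₂ = s • g x₁ + t • g x₂ := by rw [hgx₁, hgx₂]
    _ ≤ g (s • x₁ + t • x₂) := hg.2 hx₁ hx₂ hs ht hst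
    _ ≤ hle (s • β₁ + t • β₂) := (hhle _ ((convex_Ici ℓ) hβ₁ hβ₂ hs ht hst)).2 ⟨_, hz, hfz, rfl⟩

theorem eq_of_isGreatest_sublevel_of_le {x₀ : E} (hx₀ : x₀ ∈ P) (hmax : IsMaxOn g P x₀)
    (hhle : ∀ β, ℓ ≤ β → IsGreatest {r | ∃ x ∈ P, f x ≤ β ∧ g x = r} (hle β))
    {β : ℝ} (hℓβ : ℓ ≤ β) (hβ : f x₀ ≤ β) : hle β = g x₀ := by
  refine le_antisymm ?_ ((hhle β hℓβ).2 ⟨x₀, hx₀, hβ, rfl⟩)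
  obtain ⟨x, hx, -, hgx⟩ := (hhle β hℓβ).1
  exact hgx ▸ hmax hx

theorem lt_of_isGreatest_sublevel_of_lt {x₀ : E} (hmax : IsMaxOn g P x₀)
    (hmin : IsMinOn f {x ∈ P | g x = g x₀} x₀)
    (hhle : ∀ β, ℓ ≤ β → IsGreatest {r | ∃ x ∈ P, f x ≤ β ∧ g x = r} (hle β))
    {β : ℝ} (hℓβ : ℓ ≤ β) (hβ : β < f x₀) : hle β < g x₀ := by
  obtain ⟨x, hx, hfx, hgx⟩ := (hhle β hℓβ).1
  refine hgx ▸ (hmax hx).lt_of_ne fun hgx₀ => ?_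
  exact (hfx.trans_lt hβ).not_ge (hmin ⟨hx, hgx₀⟩)

theorem eq_of_isGreatest_level_of_strictMonoOn (hℓ : ∀ x ∈ P, ℓ ≤ f x) {b : ℝ}
    (hmono : StrictMonoOn hle (Icc ℓ b))
    (hhle : ∀ β, ℓ ≤ β → IsGreatest {r | ∃ x ∈ P, f x ≤ β ∧ g x = r} (hle β))
    {β v : ℝ} (hβ : β ∈ Icc ℓ b) (hv : IsGreatest {r | ∃ x ∈ P, f x = β ∧ g x = r} v) :
    v = hle β := by
  obtain ⟨y, hy, hfy, rfl⟩ := hv.1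
  refine le_antisymm ((hhle β hβ.1).2 ⟨y, hy, hfy.le, rfl⟩) ?_
  obtain ⟨x, hx, hfx, hgx⟩ := (hhle β hβ.1).1
  rcases hfx.eq_or_lt with hfx | hfx
  · exact hv.2 ⟨x, hx, hfx, hgx⟩
  · -- the maximiser for budget `β` would already be feasible for the smaller budget `f x`
    have hfxb : f x ∈ Icc ℓ b := ⟨hℓ x hx, hfx.le.trans hβ.2⟩
    have := (hhle (f x) hfxb.1).2 ⟨x, hx, le_rfl, hgx⟩
    exact absurd (hmono hfxb hβ hfx) this.not_gt

end ValueFunction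

theorem stmt3_general {n : ℕ} (S : Finset (Fin n → ℝ))
    (P : Set (Fin n → ℝ)) (hP : P = convexHull ℝ ↑S) (c a : Fin n → ℝ)
    (ℓ u : ℝ) (hℓ : IsLeast {r | ∃ x ∈ P, ∑ i, a i * x i = r} ℓ)
    (hu : IsGreatest {r | ∃ x ∈ P, ∑ i, a i * x i = r} u)
    (heq hle : ℝ → ℝ)
    (hheq : ∀ β ∈ Set.Icc ℓ u,
      IsGreatest {r | ∃ x ∈ P, (∑ i, a i * x i) = β ∧ (∑ i, c i * x i) = r} (heq β))
    (hhle : ∀ β, ℓ ≤ β →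
      IsGreatest {r | ∃ x ∈ P, (∑ i, a i * x i) ≤ β ∧ (∑ i, c i * x i) = r} (hle β)) :
    ∃ βstar : ℝ, ℓ ≤ βstar ∧ βstar ≤ u ∧
      (∀ β ∈ Set.Icc ℓ βstar, heq β = hle β) ∧
      StrictMonoOn hle (Set.Icc ℓ βstar) ∧
      StrictMonoOn heq (Set.Icc ℓ βstar) ∧
      (∀ β, βstar ≤ β → hle β = hle βstar) := by
  have hPc : IsCompact P := hP ▸ S.finite_toSet.isCompact_convexHull (𝕜 := ℝ)
  have hPconv : Convex ℝ P := hP ▸ convex_convexHull ℝ _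
  have hne : P.Nonempty := let ⟨x, hx, _⟩ := hℓ.1; ⟨x, hx⟩
  have hcont (v : Fin n → ℝ) : Continuous fun x : Fin n → ℝ => ∑ i, v i * x i :=
    continuous_const.dotProduct continuous_id
  obtain ⟨x₀, hx₀, hmax, hmin⟩ :=
    hPc.exists_isMaxOn_isMinOn_argmax hne (hcont a).continuousOn (hcont c)
  have hℓa : ∀ x ∈ P, ℓ ≤ ∑ i, a i * x i := fun x hx => hℓ.2 ⟨x, hx, rfl⟩
  have hconc := concaveOn_of_isGreatest_sublevel ((dotProductBilin ℝ ℝ a).convexOn hPconv)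
    ((dotProductBilin ℝ ℝ c).concaveOn hPconv) hhle
  have hstrict : StrictMonoOn hle (Icc ℓ (∑ i, a i * x₀ i)) :=
    (hconc.subset Icc_subset_Ici_self (convex_Icc _ _)).strictMonoOn_Icc_of_lt_right
      fun β hβ => (lt_of_isGreatest_sublevel_of_lt hmax hmin hhle hβ.1 hβ.2).trans_eq
        (eq_of_isGreatest_sublevel_of_le hx₀ hmax hhle (hℓa x₀ hx₀) le_rfl).symm
  have hβu : ∑ i, a i * x₀ i ≤ u := hu.2 ⟨x₀, hx₀, rfl⟩
  have hagree : ∀ β ∈ Icc ℓ (∑ i, a i * x₀ i), heq β = hle β := fun β hβ =>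
    eq_of_isGreatest_level_of_strictMonoOn hℓa hstrict hhle hβ (hheq β ⟨hβ.1, hβ.2.trans hβu⟩)
  refine ⟨_, hℓa x₀ hx₀, hβu, hagree, hstrict,
    hstrict.congr fun β hβ => (hagree β hβ).symm, fun β hβ => ?_⟩
  rw [eq_of_isGreatest_sublevel_of_le hx₀ hmax hhle ((hℓa x₀ hx₀).trans hβ) hβ,
    eq_of_isGreatest_sublevel_of_le hx₀ hmax hhle (hℓa x₀ hx₀) le_rfl]

theorem stmt3 {n : ℕ} (S : Finset (Fin n → ℝ)) (hS : S.Nonempty)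
    (P : Set (Fin n → ℝ)) (hP : P = convexHull ℝ ↑S) (c a : Fin n → ℝ)
    (ℓ u : ℝ) (hℓ : IsLeast {r | ∃ x ∈ P, ∑ i, a i * x i = r} ℓ)
    (hu : IsGreatest {r | ∃ x ∈ P, ∑ i, a i * x i = r} u)
    (heq hle : ℝ → ℝ)
    (hheq : ∀ β ∈ Set.Icc ℓ u,
      IsGreatest {r | ∃ x ∈ P, (∑ i, a i * x i) = β ∧ (∑ i, c i * x i) = r} (heq β))
    (hhle : ∀ β, ℓ ≤ β →
      IsGreatest {r | ∃ x ∈ P, (∑ i, a i * x i) ≤ β ∧ (∑ i, c i * x i) = r} (hle β)) :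
    ∃ βstar : ℝ, ℓ ≤ βstar ∧ βstar ≤ u ∧
      (∀ β ∈ Set.Icc ℓ βstar, heq β = hle β) ∧
      StrictMonoOn hle (Set.Icc ℓ βstar) ∧
      StrictMonoOn heq (Set.Icc ℓ βstar) ∧
      (∀ β, βstar ≤ β → hle β = hle βstar) :=
  stmt3_general S P hP c a ℓ u hℓ hu heq hle hheq hhle
end

section
/- Let G be the 1-sum of graphs G1 and G2 at vertices v1 ∈ V(G1) and v2 ∈ V(G2) (identify v1 with v2). Then the stable set polytope of G equals the 1-sum of the stable set polytopes of G1 and G2 at coordinates v1 and v2; in particular, P_stab(G) is described by the union of inequality descriptions of P_stab(G1) and P_stab(G2) with the variables v1 and v2 identified. -/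
noncomputable def Pstab {V : Type*} [Fintype V] [DecidableEq V] (G : SimpleGraph V) :
    Set (V → ℝ) :=
  convexHull ℝ {x | ∃ S : Finset V, IsStable G S ∧ x = chi S}

/-- The vertex set of the 1-sum of `G1` and `G2` at `v1`, `v2`: the vertex `v2` of `G2`
is identified with the vertex `v1` of `G1` (represented by `Sum.inl v1`). -/
abbrev OneSumVerts (V1 V2 : Type*) (v2 : V2) := V1 ⊕ {v : V2 // v ≠ v2}

/-- The 1-sum of the graphs `G1` and `G2` at the vertices `v1` and `v2`. -/
def oneSumGraph {V1 V2 : Type*} (G1 : SimpleGraph V1) (G2 : SimpleGraph V2)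
    (v1 : V1) (v2 : V2) : SimpleGraph (OneSumVerts V1 V2 v2) :=
  SimpleGraph.fromRel (fun p q =>
    match p, q with
    | Sum.inl u, Sum.inl w => G1.Adj u w
    | Sum.inr u, Sum.inr w => G2.Adj u.1 w.1
    | Sum.inl u, Sum.inr w => u = v1 ∧ G2.Adj v2 w.1
    | Sum.inr u, Sum.inl w => w = v1 ∧ G2.Adj v2 u.1)

/-!
Restricting a point of `Pstab G` along the graph homomorphisms `G1 →g G` and `G2 →g G`
gives one inclusion. Conversely, let `x ∈ Pstab G1` and `y ∈ Pstab G2` with `x v1 = y v2 = c`.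
Splitting the stable sets according to whether they contain the cut vertex writes
`x = c • p₁ + (1 - c) • q₁` and `y = c • p₂ + (1 - c) • q₂`, where `p₁, p₂` are convex
combinations of stable sets containing the cut vertex and `q₁, q₂` of stable sets avoiding
it. Two stable sets that agree at the cut vertex glue to a stable set of the 1-sum, so the
glued points `(p₁, p₂)` and `(q₁, q₂)` lie in `Pstab G`, and hence so does the glued `(x, y)`.
-/

open Set

theorem exists_eq_smul_add_smul_of_mem_convexHull_union {E : Type*} [AddCommGroup E]
    [Module ℝ E] {s t : Set E} (hs : s.Nonempty) (ht : t.Nonempty) (f : E →ₗ[ℝ] ℝ)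
    (hfs : ∀ a ∈ s, f a = 1) (hft : ∀ b ∈ t, f b = 0) {x : E}
    (hx : x ∈ convexHull ℝ (s ∪ t)) :
    f x ∈ Icc 0 1 ∧ ∃ p ∈ convexHull ℝ s, ∃ q ∈ convexHull ℝ t,
      x = f x • p + (1 - f x) • q := by
  have hfs' : ∀ p ∈ convexHull ℝ s, f p = 1 := fun p hp =>
    convexHull_min hfs (convex_hyperplane f.isLinear 1) hp
  have hft' : ∀ q ∈ convexHull ℝ t, f q = 0 := fun q hq =>
    convexHull_min hft (convex_hyperplane f.isLinear 0) hq
  rw [convexHull_union hs ht, mem_convexJoin] at hx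
  obtain ⟨p, hp, q, hq, a, b, ha, hb, hab, rfl⟩ := hx
  have hfx : f (a • p + b • q) = a := by simp [hfs' p hp, hft' q hq]
  rw [hfx, ← hab, add_sub_cancel_left]
  exact ⟨⟨ha, by linarith⟩, p, hp, q, hq, rfl⟩

def IsStableVector {V : Type*} (G : SimpleGraph V) (x : V → ℝ) : Prop :=
  (∀ v, x v = 0 ∨ x v = 1) ∧ ∀ u v, G.Adj u v → x u = 0 ∨ x v = 0

section StableVector

variable {V W : Type*} {G : SimpleGraph V} {H : SimpleGraph W}

theorem IsStableVector.comp {x : W → ℝ} (hx : IsStableVector H x) (f : G →g H) :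
    IsStableVector G (x ∘ f) :=
  ⟨fun v => hx.1 (f v), fun _ _ huv => hx.2 _ _ (f.map_adj huv)⟩

theorem isStableVector_pi_single [DecidableEq V] (v : V) :
    IsStableVector G (Pi.single v 1) := by
  refine ⟨fun u => ?_, fun u w huw => ?_⟩
  · by_cases h : u = v <;> simp [h]
  · by_cases h : u = v
    · subst h; simp [huw.ne.symm]
    · simp [h]

theorem isStableVector_zero : IsStableVector G 0 :=
  ⟨fun _ => Or.inl rfl, fun _ _ _ => Or.inl rfl⟩

theorem isStableVector_chi [DecidableEq V] {S : Finset V} (hS : IsStable G S) :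
    IsStableVector G (chi S) := by
  refine ⟨fun v => ?_, fun u v huv => ?_⟩
  · by_cases h : v ∈ S <;> simp [chi, h]
  · by_cases hu : u ∈ S
    · by_cases hv : v ∈ S
      · exact absurd huv (hS u hu v hv)
      · simp [chi, hv]
    · simp [chi, hu]

theorem IsStableVector.eq_chi [Fintype V] [DecidableEq V] {x : V → ℝ}
    (hx : IsStableVector G x) :
    ∃ S : Finset V, IsStable G S ∧ x = chi S := by
  refine ⟨Finset.univ.filter (x · = 1), fun u hu v hv huv => ?_, funext fun v => ?_⟩
  · simp only [Finset.mem_filter, Finset.mem_univ, true_and] at hu hv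
    rcases hx.2 u v huv with h | h <;> linarith
  · rcases hx.1 v with h | h <;> simp [chi, h]

theorem pstab_eq_convexHull [Fintype V] [DecidableEq V] :
    Pstab G = convexHull ℝ {x | IsStableVector G x} := by
  unfold Pstab
  congr 1
  ext x
  exact ⟨fun ⟨_, hS, hx⟩ => hx ▸ isStableVector_chi hS, IsStableVector.eq_chi⟩

theorem comp_mem_pstab [Fintype V] [DecidableEq V] [Fintype W] [DecidableEq W] {x : W → ℝ}
    (hx : x ∈ Pstab H) (f : G →g H) : x ∘ f ∈ Pstab G := by
  rw [pstab_eq_convexHull] at hx ⊢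
  have hfx := mem_image_of_mem (LinearMap.funLeft ℝ ℝ f) hx
  rw [LinearMap.image_convexHull] at hfx
  refine convexHull_mono ?_ hfx
  rintro _ ⟨y, hy, rfl⟩
  exact hy.comp f

theorem exists_eq_smul_add_smul_of_mem_pstab [Fintype V] [DecidableEq V] {x : V → ℝ}
    (hx : x ∈ Pstab G) (v : V) :
    x v ∈ Icc 0 1 ∧
      ∃ p ∈ convexHull ℝ {y | IsStableVector G y ∧ y v = 1},
      ∃ q ∈ convexHull ℝ {y | IsStableVector G y ∧ y v = 0},
        x = x v • p + (1 - x v) • q := by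
  have hsplit : {y | IsStableVector G y} =
      {y | IsStableVector G y ∧ y v = 1} ∪ {y | IsStableVector G y ∧ y v = 0} := by
    ext y
    constructor
    · intro hy
      rcases hy.1 v with h | h
      exacts [Or.inr ⟨hy, h⟩, Or.inl ⟨hy, h⟩]
    · rintro (⟨hy, -⟩ | ⟨hy, -⟩) <;> exact hy
  rw [pstab_eq_convexHull, hsplit] at hx
  refine exists_eq_smul_add_smul_of_mem_convexHull_union ?_ ?_
    (LinearMap.proj v) (fun _ h => h.2) (fun _ h => h.2) hx
  exacts [⟨_, isStableVector_pi_single v, by simp⟩, ⟨0, isStableVector_zero, rfl⟩]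

end StableVector

section OneSum

variable {V1 V2 : Type*} {G1 : SimpleGraph V1} {G2 : SimpleGraph V2} {v1 : V1} {v2 : V2}

variable (V1 v2) in
/-- The coordinate `v2` of the second vector is dropped: it is meant to agree with the
coordinate `v1` of the first. -/
def oneSumGlue : (V1 → ℝ) × (V2 → ℝ) →ₗ[ℝ] (OneSumVerts V1 V2 v2 → ℝ) where
  toFun xy := Sum.elim xy.1 fun w => xy.2 w
  map_add' _ _ := by ext (u | w) <;> rfl
  map_smul' _ _ := by ext (u | w) <;> rfl

@[simp] theorem oneSumGlue_inl (xy : (V1 → ℝ) × (V2 → ℝ)) (u : V1) :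
    oneSumGlue V1 v2 xy (.inl u) = xy.1 u := rfl

variable [DecidableEq V2]

variable (v1 v2) in
def oneSumInr (w : V2) : OneSumVerts V1 V2 v2 :=
  if h : w = v2 then .inl v1 else .inr ⟨w, h⟩

@[simp] theorem oneSumInr_self : oneSumInr v1 v2 v2 = .inl v1 := dif_pos rfl

@[simp] theorem oneSumInr_val (w : {v : V2 // v ≠ v2}) : oneSumInr v1 v2 w.1 = .inr w :=
  dif_neg w.2

@[simp] theorem oneSumInr_eq_inl_iff {w : V2} {u : V1} :
    oneSumInr v1 v2 w = .inl u ↔ w = v2 ∧ v1 = u := by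
  unfold oneSumInr; split_ifs with h <;> simp [h]

@[simp] theorem oneSumInr_eq_inr_iff {w : V2} {w' : {v : V2 // v ≠ v2}} :
    oneSumInr v1 v2 w = .inr w' ↔ w = w'.1 := by
  unfold oneSumInr; split_ifs with h
  · simp [h, w'.2.symm]
  · simp [Subtype.ext_iff]

theorem oneSumInr_injective : Function.Injective (oneSumInr (V1 := V1) v1 v2) := by
  intro a b h
  unfold oneSumInr at h
  split_ifs at h with ha hb hb <;> simp_all [Subtype.ext_iff]

theorem oneSumGlue_oneSumInr {x : V1 → ℝ} {y : V2 → ℝ} (h : x v1 = y v2) (w : V2) :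
    oneSumGlue V1 v2 (x, y) (oneSumInr v1 v2 w) = y w := by
  unfold oneSumInr; split_ifs with hw
  · simp [hw, h]
  · rfl

variable (G1 G2 v1 v2)

theorem oneSumGraph_eq_sup_map :
    oneSumGraph G1 G2 v1 v2 = G1.map Sum.inl ⊔ G2.map (oneSumInr v1 v2) := by
  ext (u | u) (w | w) <;>
    simp [oneSumGraph, SimpleGraph.map_adj', SimpleGraph.adj_comm, eq_comm, and_comm]

def oneSumInlHom : G1 →g oneSumGraph G1 G2 v1 v2 where
  toFun := Sum.inl
  map_rel' h := by
    rw [oneSumGraph_eq_sup_map]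
    exact Or.inl (SimpleGraph.map_adj_apply' h (Sum.inl_injective.ne h.ne))

def oneSumInrHom : G2 →g oneSumGraph G1 G2 v1 v2 where
  toFun := oneSumInr v1 v2
  map_rel' h := by
    rw [oneSumGraph_eq_sup_map]
    exact Or.inr (SimpleGraph.map_adj_apply' h (oneSumInr_injective.ne h.ne))

variable {G1 G2 v1 v2}

theorem IsStableVector.oneSumGlue {x : V1 → ℝ} {y : V2 → ℝ} (hx : IsStableVector G1 x)
    (hy : IsStableVector G2 y) (h : x v1 = y v2) :
    IsStableVector (oneSumGraph G1 G2 v1 v2) (oneSumGlue V1 v2 (x, y)) := by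
  refine ⟨fun | .inl u => hx.1 u | .inr w => hy.1 w, fun p q hpq => ?_⟩
  rw [oneSumGraph_eq_sup_map] at hpq
  rcases hpq with ⟨-, a, b, hab, rfl, rfl⟩ | ⟨-, a, b, hab, rfl, rfl⟩
  · exact hx.2 a b hab
  · simpa only [oneSumGlue_oneSumInr h] using hy.2 a b hab

theorem oneSumGlue_mem_pstab [Fintype V1] [DecidableEq V1] [Fintype V2] (t : ℝ)
    {p : V1 → ℝ} (hp : p ∈ convexHull ℝ {x | IsStableVector G1 x ∧ x v1 = t})
    {q : V2 → ℝ} (hq : q ∈ convexHull ℝ {y | IsStableVector G2 y ∧ y v2 = t}) :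
    oneSumGlue V1 v2 (p, q) ∈ Pstab (oneSumGraph G1 G2 v1 v2) := by
  rw [pstab_eq_convexHull]
  have hpq := mem_image_of_mem (oneSumGlue V1 v2) (mk_mem_convexHull_prod hp hq)
  rw [LinearMap.image_convexHull] at hpq
  refine convexHull_mono ?_ hpq
  rintro _ ⟨⟨a, b⟩, ⟨⟨ha, hat⟩, hb, hbt⟩, rfl⟩
  exact ha.oneSumGlue hb (hat.trans hbt.symm)

end OneSum

/-- Chvátal's theorem for 1-sums: the stable set polytope of the 1-sum of two graphs
is the 1-sum of their stable set polytopes (points of the combined polytope are exactly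
the compatible pairs of points of the two polytopes, with the identified coordinate shared). -/
theorem stmt10 {V1 V2 : Type*} [Fintype V1] [DecidableEq V1] [Fintype V2] [DecidableEq V2]
    (G1 : SimpleGraph V1) (G2 : SimpleGraph V2) (v1 : V1) (v2 : V2) :
    Pstab (oneSumGraph G1 G2 v1 v2) =
      {z : OneSumVerts V1 V2 v2 → ℝ |
        ∃ x ∈ Pstab G1, ∃ y ∈ Pstab G2, x v1 = y v2 ∧
          (∀ u : V1, z (Sum.inl u) = x u) ∧
          (∀ w : {v : V2 // v ≠ v2}, z (Sum.inr w) = y w.1)} := by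
  ext z
  constructor
  · intro hz
    refine ⟨z ∘ Sum.inl, comp_mem_pstab hz (oneSumInlHom G1 G2 v1 v2),
      z ∘ oneSumInr v1 v2, comp_mem_pstab hz (oneSumInrHom G1 G2 v1 v2),
      by simp, fun _ => rfl, fun w => by simp⟩
  · rintro ⟨x, hx, y, hy, hxy, hzx, hzy⟩
    obtain rfl : z = oneSumGlue V1 v2 (x, y) := funext fun
      | .inl u => hzx u
      | .inr w => hzy w
    obtain ⟨hxv, p1, hp1, q1, hq1, hx⟩ := exists_eq_smul_add_smul_of_mem_pstab hx v1
    obtain ⟨-, p2, hp2, q2, hq2, hy⟩ := exists_eq_smul_add_smul_of_mem_pstab hy v2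
    rw [← hxy] at hy
    have hz : oneSumGlue V1 v2 (x, y) =
        x v1 • oneSumGlue V1 v2 (p1, p2) + (1 - x v1) • oneSumGlue V1 v2 (q1, q2) := by
      rw [← map_smul, ← map_smul, ← map_add, Prod.smul_mk, Prod.smul_mk, Prod.mk_add_mk,
        ← hx, ← hy]
    rw [hz]
    exact convex_convexHull ℝ _ (oneSumGlue_mem_pstab 1 hp1 hp2)
      (oneSumGlue_mem_pstab 0 hq1 hq2) hxv.1 (sub_nonneg.2 hxv.2) (add_sub_cancel _ _)
end

section
/- Let P ⊆ [0,1]^n be a polytope whose integer points are exactly the vertices of an integral polytope conv(P ∩ {0,1}^n) = P. Then P has the persistency property: for every c ∈ R^n and every c-maximal point x ∈ P, there exists a c-maximal integer point y ∈ P ∩ {0,1}^n with y_i = x_i for all i with x_i ∈ {0,1}. -/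
/-! An optimal point `x` of `P` is a convex combination of 0/1 points of `P`, and every point
carrying positive weight in it is again optimal, for the objective and for any other linear
function maximised over `P` at `x`. Since `P` lies in the box, `y ↦ -y i` is such a function
when `x i = 0`, and `y ↦ y i` when `x i = 1`. -/

open Finset

theorem Finset.eq_of_sum_mul_eq_of_le {ι 𝕜 : Type*} [CommRing 𝕜] [LinearOrder 𝕜]
    [IsStrictOrderedRing 𝕜]
    {t : Finset ι} {w a : ι → 𝕜} {M : 𝕜}
    (hw₀ : ∀ j ∈ t, 0 ≤ w j) (hw₁ : ∑ j ∈ t, w j = 1)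
    (ha : ∀ j ∈ t, a j ≤ M) (hM : ∑ j ∈ t, w j * a j = M) {j : ι} (hj : j ∈ t) (hwj : w j ≠ 0) :
    a j = M := by
  have hgap : ∑ k ∈ t, w k * (M - a k) = 0 := by
    simp only [mul_sub, sum_sub_distrib, ← sum_mul, hw₁, hM, one_mul, sub_self]
  have := (sum_eq_zero_iff_of_nonneg fun k hk =>
    mul_nonneg (hw₀ k hk) (sub_nonneg.2 (ha k hk))).1 hgap j hj
  linarith [(mul_eq_zero.1 this).resolve_left hwj]

theorem exists_mem_forall_eq_of_mem_convexHull {𝕜 E : Type*} [Field 𝕜] [LinearOrder 𝕜]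
    [IsStrictOrderedRing 𝕜] [AddCommGroup E] [Module 𝕜 E] {s : Set E} {x : E}
    (hx : x ∈ convexHull 𝕜 s) :
    ∃ y ∈ s, ∀ f : E →ₗ[𝕜] 𝕜, (∀ z ∈ s, f z ≤ f x) → f y = f x := by
  rw [_root_.convexHull_eq] at hx
  obtain ⟨ι, t, w, z, hw₀, hw₁, hzs, rfl⟩ := hx
  obtain ⟨j, hj, hwj⟩ : ∃ j ∈ t, w j ≠ 0 := by
    by_contra! h
    simp [sum_eq_zero h] at hw₁
  refine ⟨z j, hzs j hj, fun f hf => ?_⟩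
  rw [centerMass_eq_of_sum_1 _ _ hw₁] at hf ⊢
  simp only [map_sum, map_smul, smul_eq_mul] at hf ⊢
  exact eq_of_sum_mul_eq_of_le hw₀ hw₁ (fun k hk => hf _ (hzs k hk)) rfl hj hwj

/-- Integral polytopes in the 0/1 cube have the persistency property. -/
theorem stmt13 {n : ℕ} (P : Set (Fin n → ℝ))
    (hbox : P ⊆ {x | ∀ i, 0 ≤ x i ∧ x i ≤ 1})
    (hintegral : P = convexHull ℝ {x ∈ P | ∀ i, x i = 0 ∨ x i = 1})
    (c : Fin n → ℝ) (x : Fin n → ℝ) (hx : x ∈ P)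
    (hmax : ∀ y ∈ P, ∑ i, c i * y i ≤ ∑ i, c i * x i) :
    ∃ y ∈ P, (∀ i, y i = 0 ∨ y i = 1) ∧
      (∀ z ∈ P, (∀ i, z i = 0 ∨ z i = 1) → ∑ i, c i * z i ≤ ∑ i, c i * y i) ∧
      (∀ i, (x i = 0 ∨ x i = 1) → y i = x i) := by
  obtain ⟨y, ⟨hyP, hy01⟩, hy⟩ := exists_mem_forall_eq_of_mem_convexHull (hintegral ▸ hx)
  refine ⟨y, hyP, hy01, fun z hz _ => ?_, fun i hi => ?_⟩
  · have hy_opt := hy (dotProductBilin ℝ ℝ c) fun z hz => hmax z hz.1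
    simp only [dotProductBilin_apply_apply, dotProduct] at hy_opt
    exact hy_opt ▸ hmax z hz
  · rcases hi with h0 | h1
    · have hyi := hy (-LinearMap.proj i) fun z hz => by simp [h0, (hbox hz.1 i).1]
      simpa [h0] using hyi
    · have hyi := hy (LinearMap.proj i) fun z hz => by simp [h1, (hbox hz.1 i).2]
      simpa [h1] using hyi
end
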